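/- Let G be a topological group and let K, L, P be affine G-flows with affine extensions φ: K → L, η: K → P, and ψ: P → L satisfying φ = ψ ∘ η. If φ is proximally irreducible, then η is proximally irreducible. -/

import Mathlib

universe u v w x

/-- An affine `G`-flow: a nonempty compact convex subset of a Hausdorff locally convex
real topological vector space, equipped with a continuous action of `G` by affine
homeomorphisms.  The action is recorded as a function `smul : G → E → E` on the ambient
space whose behaviour is only constrained on `carrier`. -/
structure AffineFlow (G : Type u) [Group G] [TopologicalSpace G] [IsTopologicalGroup G] where
  /-- the ambient locally convex topological real vector space -/
  E : Type v
  [instAddCommGroup : AddCommGroup E]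
  [instModule : Module ℝ E]
  [instTopologicalSpace : TopologicalSpace E]
  [instT2Space : T2Space E]
  [instTopologicalAddGroup : IsTopologicalAddGroup E]
  [instContinuousSMul : ContinuousSMul ℝ E]
  [instLocallyConvexSpace : LocallyConvexSpace ℝ E]
  /-- the compact convex set itself -/
  carrier : Set E
  nonempty' : carrier.Nonempty
  isCompact' : IsCompact carrier
  convex' : Convex ℝ carrier
  /-- the action of `G` -/
  smul : G → E → E
  smul_mem' : ∀ g : G, ∀ x ∈ carrier, smul g x ∈ carrier
  one_smul' : ∀ x ∈ carrier, smul 1 x = x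
  mul_smul' : ∀ g h : G, ∀ x ∈ carrier, smul (g * h) x = smul g (smul h x)
  continuousOn_smul' : ContinuousOn (fun p : G × E => smul p.1 p.2) (Set.univ ×ˢ carrier)
  smul_affine' : ∀ g : G, ∀ x ∈ carrier, ∀ y ∈ carrier, ∀ t : ℝ, 0 ≤ t → t ≤ 1 →
    smul g (t • x + (1 - t) • y) = t • smul g x + (1 - t) • smul g y

attribute [instance] AffineFlow.instAddCommGroup AffineFlow.instModule
  AffineFlow.instTopologicalSpace AffineFlow.instT2Space AffineFlow.instTopologicalAddGroup
  AffineFlow.instContinuousSMul AffineFlow.instLocallyConvexSpace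

/-- An affine `G`-map between affine `G`-flows: a continuous affine `G`-equivariant map
(recorded on the ambient spaces, with all conditions on the carriers). -/
def IsAffineGMap {G : Type u} [Group G] [TopologicalSpace G] [IsTopologicalGroup G]
    (K : AffineFlow.{u, v} G) (L : AffineFlow.{u, w} G) (f : K.E → L.E) : Prop :=
  Set.MapsTo f K.carrier L.carrier ∧ ContinuousOn f K.carrier ∧
    (∀ g : G, ∀ x ∈ K.carrier, f (K.smul g x) = L.smul g (f x)) ∧
    ∀ x ∈ K.carrier, ∀ y ∈ K.carrier, ∀ t : ℝ, 0 ≤ t → t ≤ 1 →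
      f (t • x + (1 - t) • y) = t • f x + (1 - t) • f y

/-- An affine extension: a surjective affine `G`-map. -/
def IsAffineExtension {G : Type u} [Group G] [TopologicalSpace G] [IsTopologicalGroup G]
    (K : AffineFlow.{u, v} G) (L : AffineFlow.{u, w} G) (f : K.E → L.E) : Prop :=
  IsAffineGMap K L f ∧ f '' K.carrier = L.carrier

/-- An affine subflow: a nonempty closed convex `G`-invariant subset. -/
def AffineFlow.IsAffineSubflow {G : Type u} [Group G] [TopologicalSpace G] [IsTopologicalGroup G]
    (K : AffineFlow.{u, v} G) (C : Set K.E) : Prop :=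
  C.Nonempty ∧ C ⊆ K.carrier ∧ IsClosed C ∧ Convex ℝ C ∧ ∀ g : G, ∀ x ∈ C, K.smul g x ∈ C

/-- An affine extension `f : K → L` is affine `G`-irreducible if no proper affine subflow
of `K` maps onto `L`. -/
def IsAffineIrreducibleExt {G : Type u} [Group G] [TopologicalSpace G] [IsTopologicalGroup G]
    (K : AffineFlow.{u, v} G) (L : AffineFlow.{u, w} G) (f : K.E → L.E) : Prop :=
  IsAffineExtension K L f ∧
    ∀ C : Set K.E, K.IsAffineSubflow C → C ≠ K.carrier → f '' C ≠ L.carrier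

/-- An affine extension `f : K → L` is proximally irreducible if the only affine subflow
`C` of `K` meeting `conv (cl (ext K) ∩ f ⁻¹' {y})` for every `y ∈ cl (ext L)` is `K` itself. -/
def IsProximallyIrreducibleExt {G : Type u} [Group G] [TopologicalSpace G] [IsTopologicalGroup G]
    (K : AffineFlow.{u, v} G) (L : AffineFlow.{u, w} G) (f : K.E → L.E) : Prop :=
  IsAffineExtension K L f ∧
    ∀ C : Set K.E, K.IsAffineSubflow C →
      (∀ y ∈ closure (L.carrier.extremePoints ℝ),
        (C ∩ convexHull ℝ (closure (K.carrier.extremePoints ℝ) ∩ f ⁻¹' {y})).Nonempty) →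
      C = K.carrier

/-- An affine `G`-flow `K` is affine `G`-projective if for all affine `G`-flows `L`, `P`,
every affine `G`-map `φ : K → L` and every affine extension `π : P → L`, there is an
affine `G`-map `ψ : K → P` with `π ∘ ψ = φ` (on the carrier of `K`). -/
def IsAffineGProjective {G : Type u} [Group G] [TopologicalSpace G] [IsTopologicalGroup G]
    (K : AffineFlow.{u, v} G) : Prop :=
  ∀ (L : AffineFlow.{u, w} G) (P : AffineFlow.{u, x} G) (φ : K.E → L.E) (π : P.E → L.E),
    IsAffineGMap K L φ → IsAffineExtension P L π →
    ∃ ψ : K.E → P.E, IsAffineGMap K P ψ ∧ ∀ y ∈ K.carrier, π (ψ y) = φ y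

/-!
Every extreme point of `L` lifts along `ψ` to an extreme point of `P`: the fibre of `ψ` over it
is a nonempty compact extreme subset of `P`, and by the Krein–Milman lemma it has an extreme point,
which is then extreme in `P`. Since `ψ` maps the compact set `cl (ext P)` onto a closed set, this
gives `cl (ext L) ⊆ ψ (cl (ext P))`. So for `y ∈ cl (ext L)` pick `p ∈ cl (ext P)` over it; the
fibre of `η` over `p` lies in the fibre of `φ` over `y`, and a subflow witnessing the hypothesis
of proximal irreducibility for `η` also witnesses it for `φ`.
-/

open Set

section AffineOn

variable {E F : Type*} [AddCommGroup E] [Module ℝ E] [AddCommGroup F] [Module ℝ F]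

def AffineOn (s : Set E) (f : E → F) : Prop :=
  ∀ x ∈ s, ∀ y ∈ s, ∀ t : ℝ, 0 ≤ t → t ≤ 1 → f (t • x + (1 - t) • y) = t • f x + (1 - t) • f y

theorem AffineOn.mem_openSegment_image {s : Set E} {f : E → F} (hf : AffineOn s f)
    {x y z : E} (hx : x ∈ s) (hy : y ∈ s) (hz : z ∈ openSegment ℝ x y) :
    f z ∈ openSegment ℝ (f x) (f y) := by
  obtain ⟨a, b, ha, hb, hab, rfl⟩ := hz
  obtain rfl : b = 1 - a := by linarith
  exact ⟨a, 1 - a, ha, hb, hab, (hf x hx y hy a ha.le (by linarith)).symm⟩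

theorem AffineOn.isExtreme_inter_preimage {s : Set E} {f : E → F} (hf : AffineOn s f)
    {w : F} (hw : w ∈ (f '' s).extremePoints ℝ) : IsExtreme ℝ s (s ∩ f ⁻¹' {w}) := by
  refine ⟨inter_subset_left, fun x hx y hy z ⟨_, hzw⟩ hz => ⟨hx, ?_⟩⟩
  have hwz : f z = w := hzw
  exact hw.2 (mem_image_of_mem f hx) (mem_image_of_mem f hy)
    (hwz ▸ hf.mem_openSegment_image hx hy hz)

variable [TopologicalSpace E] [T2Space E] [IsTopologicalAddGroup E] [ContinuousSMul ℝ E]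
  [LocallyConvexSpace ℝ E] [TopologicalSpace F] [T2Space F] {s : Set E} {f : E → F}

theorem AffineOn.surjOn_extremePoints_image (hf : AffineOn s f) (hfc : ContinuousOn f s)
    (hs : IsCompact s) : SurjOn f (s.extremePoints ℝ) ((f '' s).extremePoints ℝ) := by
  intro w hw
  have hfibre : IsCompact (s ∩ f ⁻¹' {w}) :=
    hs.of_isClosed_subset (hfc.preimage_isClosed_of_isClosed hs.isClosed isClosed_singleton)
      inter_subset_left
  obtain ⟨x, hxs, hxw⟩ := extremePoints_subset hw
  obtain ⟨y, hy⟩ := hfibre.extremePoints_nonempty ⟨x, hxs, hxw⟩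
  exact ⟨y, (hf.isExtreme_inter_preimage hw).extremePoints_subset_extremePoints hy, hy.1.2⟩

theorem AffineOn.closure_extremePoints_image_subset (hf : AffineOn s f) (hfc : ContinuousOn f s)
    (hs : IsCompact s) :
    closure ((f '' s).extremePoints ℝ) ⊆ f '' closure (s.extremePoints ℝ) := by
  have hsub : closure (s.extremePoints ℝ) ⊆ s :=
    closure_minimal extremePoints_subset hs.isClosed
  have hclosed : IsClosed (f '' closure (s.extremePoints ℝ)) :=
    ((hs.of_isClosed_subset isClosed_closure hsub).image_of_continuousOn (hfc.mono hsub)).isClosed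
  exact closure_minimal ((hf.surjOn_extremePoints_image hfc hs).mono subset_closure subset_rfl)
    hclosed

end AffineOn

/-- **Statement 13.** If an affine extension `φ : K → L` factors as `ψ ∘ η` through affine
extensions `η : K → P` and `ψ : P → L`, and `φ` is proximally irreducible, then so is `η`. -/
theorem statement13 {G : Type u} [Group G] [TopologicalSpace G] [IsTopologicalGroup G]
    (K : AffineFlow.{u, v} G) (L : AffineFlow.{u, w} G) (P : AffineFlow.{u, x} G)
    (φ : K.E → L.E) (η : K.E → P.E) (ψ : P.E → L.E)
    (hη : IsAffineExtension K P η) (hψ : IsAffineExtension P L ψ)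
    (hfac : ∀ z ∈ K.carrier, φ z = ψ (η z))
    (hφ : IsProximallyIrreducibleExt K L φ) :
    IsProximallyIrreducibleExt K P η := by
  obtain ⟨⟨-, hψc, -, hψa⟩, hψsurj⟩ := hψ
  have hlift : closure (L.carrier.extremePoints ℝ) ⊆ ψ '' closure (P.carrier.extremePoints ℝ) :=
    hψsurj ▸ AffineOn.closure_extremePoints_image_subset hψa hψc P.isCompact'
  have hKcl : closure (K.carrier.extremePoints ℝ) ⊆ K.carrier :=
    closure_minimal extremePoints_subset K.isCompact'.isClosed
  refine ⟨hη, fun C hC hmeet => hφ.2 C hC fun y hy => ?_⟩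
  obtain ⟨p, hp, rfl⟩ := hlift hy
  have hfibre : closure (K.carrier.extremePoints ℝ) ∩ η ⁻¹' {p} ⊆
      closure (K.carrier.extremePoints ℝ) ∩ φ ⁻¹' {ψ p} := fun z ⟨hz, hzp⟩ =>
    ⟨hz, show φ z = ψ p from (hfac z (hKcl hz)).trans (congrArg ψ hzp)⟩
  exact (hmeet p hp).mono (inter_subset_inter_right C (convexHull_mono hfibre))
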